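/- Let k be a field of characteristic p > 0, A = k[x,y]/(x^p, y^p) with x, y primitive (group algebra of G_{a(1)}²). For a point p = [a:b], let V(p) = A ⊗_{k[t]/(t^p)} k be the p-dimensional module induced along t ↦ a x + b y from the trivial module. Then V(p) ⊗̃ V(p) ≅ p·V(p), where ⊗̃ is the tensor product associated to the primitive (Lie) comultiplication. -/

import Mathlib

open TensorProduct

/-- The `n × n` matrix with ones on the superdiagonal (nilpotent Jordan block). -/
def shiftMat (k : Type*) [Semiring k] (n : ℕ) : Matrix (Fin n) (Fin n) k :=
  Matrix.of fun i j => if (i : ℕ) + 1 = (j : ℕ) then 1 else 0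

/-!
Identify `V` with `k[s]/(s^p)`, `s` acting by `J_p`. Then `V ⊗ V = k[s,t]/(s^p, t^p)`, on
which the Leibniz action is multiplication by `u = s + t`. In characteristic `p` we have
`u^p = s^p + t^p = 0`, so `v ↦ v(u) tʲ` maps `V` into `V ⊗ V` compatibly with the actions, for
each `j < p`. Together these maps are onto, because `s = u - t` shows that the products `uⁱ tʲ`
span `k[s,t]/(s^p, t^p)`; comparing dimensions, they give `V ⊗ V ≅ p · V`.
-/

open Module LinearMap

section Leibniz

variable {k M : Type*} [CommRing k] [AddCommGroup M] [Module k M]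

def leibnizTensor (S : Module.End k M) : Module.End k (M ⊗[k] M) :=
  S.rTensor M + S.lTensor M

lemma commute_rTensor_lTensor {N : Type*} [AddCommGroup N] [Module k N]
    (f : Module.End k M) (g : Module.End k N) :
    Commute (f.rTensor N) (g.lTensor M) :=
  (rTensor_comp_lTensor M f g).trans (lTensor_comp_rTensor M f g).symm

lemma leibnizTensor_pow_char {p : ℕ} (hp : p.Prime) [CharP k p] (S : Module.End k M) :
    leibnizTensor S ^ p = (S ^ p).rTensor M + (S ^ p).lTensor M := by
  have hp_zero : (p : Module.End k (M ⊗[k] M)) = 0 := by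
    rw [← map_natCast (algebraMap k _), CharP.cast_eq_zero, map_zero]
  rw [leibnizTensor, (commute_rTensor_lTensor S S).add_pow_prime_eq' hp, hp_zero, zero_mul,
    add_zero, rTensor_pow, lTensor_pow]

end Leibniz

section CyclicLift

variable {k M P : Type*} [CommRing k] [AddCommGroup M] [Module k M] [AddCommGroup P] [Module k P]
  {p : ℕ} {S : Module.End k M} {x : M}

lemma pow_apply_eq_zero_of_le (hx : (S ^ p) x = 0) {m : ℕ} (hm : p ≤ m) : (S ^ m) x = 0 := by
  rw [← Nat.sub_add_cancel hm, pow_add, Module.End.mul_apply, hx, map_zero]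

lemma pow_eq_zero_of_basis (b : Basis (Fin p) k M) (hb : ∀ a : Fin p, b a = (S ^ (a : ℕ)) x)
    (hx : (S ^ p) x = 0) : S ^ p = 0 :=
  b.ext fun a => by
    rw [hb, ← Module.End.mul_apply, ← pow_add, add_comm, pow_add, Module.End.mul_apply, hx,
      map_zero, LinearMap.zero_apply]

noncomputable def cyclicLift (b : Basis (Fin p) k M) (N : Module.End k P) (y : P) : M →ₗ[k] P :=
  b.constr k fun a => (N ^ (a : ℕ)) y

lemma cyclicLift_pow_apply (b : Basis (Fin p) k M) (hb : ∀ a : Fin p, b a = (S ^ (a : ℕ)) x)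
    (hx : (S ^ p) x = 0) {N : Module.End k P} (hN : N ^ p = 0) (y : P) (m : ℕ) :
    cyclicLift b N y ((S ^ m) x) = (N ^ m) y := by
  by_cases hm : m < p
  · rw [show (S ^ m) x = b ⟨m, hm⟩ from (hb ⟨m, hm⟩).symm, cyclicLift, b.constr_basis]
  · rw [pow_apply_eq_zero_of_le hx (not_lt.1 hm), pow_eq_zero_of_le (not_lt.1 hm) hN,
      map_zero, LinearMap.zero_apply]

lemma cyclicLift_comp (b : Basis (Fin p) k M) (hb : ∀ a : Fin p, b a = (S ^ (a : ℕ)) x)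
    (hx : (S ^ p) x = 0) {N : Module.End k P} (hN : N ^ p = 0) (y : P) :
    cyclicLift b N y ∘ₗ S = N ∘ₗ cyclicLift b N y :=
  b.ext fun a => by
    rw [comp_apply, comp_apply, hb, ← Module.End.mul_apply, ← pow_succ',
      cyclicLift_pow_apply b hb hx hN, cyclicLift_pow_apply b hb hx hN, pow_succ',
      Module.End.mul_apply]

end CyclicLift

section TensorSquare

variable {k M : Type*} [CommRing k] [AddCommGroup M] [Module k M] {p : ℕ}

noncomputable def piToTensorSelf (S : Module.End k M) (x : M) (b : Basis (Fin p) k M) :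
    (Fin p → M) →ₗ[k] M ⊗[k] M :=
  lsum k (fun _ => M) k fun j => cyclicLift b (leibnizTensor S) (x ⊗ₜ (S ^ (j : ℕ)) x)

variable {S : Module.End k M} {x : M}

lemma span_leibnizTensor_orbit_eq_top (b : Basis (Fin p) k M)
    (hb : ∀ a : Fin p, b a = (S ^ (a : ℕ)) x) :
    Submodule.span k (Set.range fun ij : ℕ × ℕ =>
      (leibnizTensor S ^ ij.1) (x ⊗ₜ (S ^ ij.2) x)) = ⊤ := by
  set W := Submodule.span k
    (Set.range fun ij : ℕ × ℕ => (leibnizTensor S ^ ij.1) (x ⊗ₜ (S ^ ij.2) x))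
  have hmem (i j : ℕ) : (leibnizTensor S ^ i) (x ⊗ₜ (S ^ j) x) ∈ W :=
    Submodule.subset_span ⟨(i, j), rfl⟩
  have hW : W ≤ W.comap (S.rTensor M) := by
    refine Submodule.span_le.2 ?_
    rintro _ ⟨⟨i, j⟩, rfl⟩
    have hcomm : Commute (S.lTensor M) (leibnizTensor S ^ i) :=
      ((commute_rTensor_lTensor S S).symm.add_right (Commute.refl _)).pow_right i
    have hsplit : S.rTensor M = leibnizTensor S - S.lTensor M := by
      rw [leibnizTensor, add_sub_cancel_right]
    rw [SetLike.mem_coe, Submodule.mem_comap, hsplit, ← Module.End.mul_apply, sub_mul,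
      ← pow_succ', hcomm.eq, LinearMap.sub_apply, Module.End.mul_apply, lTensor_tmul,
      ← Module.End.mul_apply S, ← pow_succ']
    exact W.sub_mem (hmem _ _) (hmem _ _)
  have hbasis (a c : ℕ) : (S ^ a) x ⊗ₜ (S ^ c) x ∈ W := by
    induction a with
    | zero => simpa using hmem 0 c
    | succ a ih =>
      rw [pow_succ', Module.End.mul_apply, ← rTensor_tmul]
      exact hW ih
  refine eq_top_iff.2 ((b.tensorProduct b).span_eq.symm.le.trans (Submodule.span_le.2 ?_))
  rintro _ ⟨⟨a, c⟩, rfl⟩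
  rw [SetLike.mem_coe, Basis.tensorProduct_apply, hb, hb]
  exact hbasis a c

lemma piToTensorSelf_single (b : Basis (Fin p) k M) (hb : ∀ a : Fin p, b a = (S ^ (a : ℕ)) x)
    (hx : (S ^ p) x = 0) (hN : leibnizTensor S ^ p = 0) (j : Fin p) (m : ℕ) :
    piToTensorSelf S x b (Pi.single j ((S ^ m) x))
      = (leibnizTensor S ^ m) (x ⊗ₜ (S ^ (j : ℕ)) x) := by
  rw [piToTensorSelf, lsum_piSingle, cyclicLift_pow_apply b hb hx hN]

lemma piToTensorSelf_comp_compLeft (b : Basis (Fin p) k M)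
    (hb : ∀ a : Fin p, b a = (S ^ (a : ℕ)) x) (hx : (S ^ p) x = 0)
    (hN : leibnizTensor S ^ p = 0) :
    piToTensorSelf S x b ∘ₗ LinearMap.compLeft S (Fin p)
      = leibnizTensor S ∘ₗ piToTensorSelf S x b :=
  pi_ext fun j v => by
    have hsingle : LinearMap.compLeft S (Fin p) (Pi.single j v) = Pi.single j (S v) :=
      funext (Pi.apply_single (fun _ => S) (fun _ => map_zero S) j v)
    rw [comp_apply, comp_apply, hsingle, piToTensorSelf, lsum_piSingle, lsum_piSingle,
      ← comp_apply (cyclicLift _ _ _), cyclicLift_comp b hb hx hN, comp_apply]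

lemma piToTensorSelf_surjective (b : Basis (Fin p) k M)
    (hb : ∀ a : Fin p, b a = (S ^ (a : ℕ)) x) (hx : (S ^ p) x = 0)
    (hN : leibnizTensor S ^ p = 0) : Function.Surjective (piToTensorSelf S x b) := by
  refine range_eq_top.1 (eq_top_iff.2 ((span_leibnizTensor_orbit_eq_top b hb).ge.trans
    (Submodule.span_le.2 ?_)))
  rintro _ ⟨⟨i, j⟩, rfl⟩
  by_cases hj : j < p
  · exact ⟨Pi.single ⟨j, hj⟩ ((S ^ i) x), piToTensorSelf_single b hb hx hN ⟨j, hj⟩ i⟩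
  · simp [pow_apply_eq_zero_of_le hx (not_lt.1 hj)]

end TensorSquare

theorem exists_linearEquiv_pi_leibnizTensor {k M : Type*} [Field k] [AddCommGroup M] [Module k M]
    {p : ℕ} (hp : p.Prime) [CharP k p] {S : Module.End k M} {x : M} (b : Basis (Fin p) k M)
    (hb : ∀ a : Fin p, b a = (S ^ (a : ℕ)) x) (hx : (S ^ p) x = 0) :
    ∃ e : (M ⊗[k] M) ≃ₗ[k] (Fin p → M),
      ∀ w, e (leibnizTensor S w) = fun i => S (e w i) := by
  have hN : leibnizTensor S ^ p = 0 := by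
    rw [leibnizTensor_pow_char hp, pow_eq_zero_of_basis b hb hx, rTensor_zero, lTensor_zero,
      add_zero]
  have hsurj := piToTensorSelf_surjective b hb hx hN
  have : Module.Finite k M := Module.Finite.of_basis b
  have hrank : finrank k (Fin p → M) = finrank k (M ⊗[k] M) := by
    simp [finrank_pi_fintype, finrank_tensorProduct, finrank_eq_card_basis b]
  let Ψ := LinearEquiv.ofBijective (piToTensorSelf S x b)
    ⟨(injective_iff_surjective_of_finrank_eq_finrank hrank).2 hsurj, hsurj⟩
  refine ⟨Ψ.symm, fun w => Ψ.injective ?_⟩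
  calc Ψ (Ψ.symm (leibnizTensor S w)) = leibnizTensor S (Ψ (Ψ.symm w)) := by
        rw [Ψ.apply_symm_apply, Ψ.apply_symm_apply]
    _ = piToTensorSelf S x b (LinearMap.compLeft S (Fin p) (Ψ.symm w)) := by
        rw [← comp_apply (piToTensorSelf S x b), piToTensorSelf_comp_compLeft b hb hx hN]; rfl

section ShiftMat

variable (k : Type*) [Field k] (n : ℕ)

lemma shiftMat_mulVec_apply {m : ℕ} (v : Fin m → k) (i : Fin m) :
    (shiftMat k m).mulVec v i = if h : (i : ℕ) + 1 < m then v ⟨(i : ℕ) + 1, h⟩ else 0 := by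
  simp only [Matrix.mulVec, dotProduct, shiftMat, Matrix.of_apply, boole_mul]
  split_ifs with h
  · rw [Finset.sum_eq_single_of_mem ⟨(i : ℕ) + 1, h⟩ (Finset.mem_univ _) fun j _ hj =>
      if_neg fun hij => hj (Fin.ext hij.symm)]
    simp
  · exact Finset.sum_eq_zero fun j _ => if_neg fun (hij : (i : ℕ) + 1 = j) => h (hij ▸ j.isLt)

lemma shiftMat_mulVecLin_pow_single_last (a : ℕ) :
    ((shiftMat k (n + 1)).mulVecLin ^ a) (Pi.single (Fin.last n) 1)
      = fun i : Fin (n + 1) => if (i : ℕ) + a = n then (1 : k) else 0 := by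
  induction a with
  | zero => ext i; simp [Pi.single_apply, Fin.ext_iff]
  | succ a ih =>
    rw [pow_succ', Module.End.mul_apply, ih]
    ext i
    rw [Matrix.mulVecLin_apply, shiftMat_mulVec_apply]
    split_ifs <;> simp_all <;> omega

noncomputable def shiftBasis : Basis (Fin (n + 1)) k (Fin (n + 1) → k) :=
  (Pi.basisFun k (Fin (n + 1))).reindex Fin.revPerm

lemma shiftBasis_apply (a : Fin (n + 1)) :
    shiftBasis k n a = ((shiftMat k (n + 1)).mulVecLin ^ (a : ℕ)) (Pi.single (Fin.last n) 1) := by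
  rw [shiftMat_mulVecLin_pow_single_last, shiftBasis, Basis.reindex_apply]
  ext i
  simp only [Pi.basisFun_apply, Fin.revPerm_symm, Fin.revPerm_apply, Pi.single_apply,
    Fin.ext_iff, Fin.val_rev]
  have := a.isLt
  congr 1
  exact propext (by omega)

end ShiftMat

/-- over `A = k[x,y]/(x^p, y^p)` with `x,y` primitive (group algebra of
`G_{a(1)}²`), the `p`-dimensional module `V(𝔭)` induced from the trivial module along
`t ↦ a x + b y` — on which `s₂` acts by `0` and a complementary `s₁` acts by the Jordan
block `J_p` — satisfies `V(𝔭) ⊗̃ V(𝔭) ≅ p · V(𝔭)` for the Leibniz tensor product. -/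
theorem induced_module_tensor_square
    (k : Type*) [Field k] (p : ℕ) (hp : p.Prime) [CharP k p] :
    let V := Fin p → k
    let S1 : V →ₗ[k] V := (shiftMat k p).mulVecLin   -- action of s₁
    let S2 : V →ₗ[k] V := 0                          -- action of s₂
    ∃ e : (V ⊗[k] V) ≃ₗ[k] (Fin p → V),
      (∀ w : V ⊗[k] V,
        e ((LinearMap.rTensor V S1 + LinearMap.lTensor V S1) w) = fun i => S1 (e w i)) ∧
      (∀ w : V ⊗[k] V,
        e ((LinearMap.rTensor V S2 + LinearMap.lTensor V S2) w) = fun i => S2 (e w i)) := by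
  intro V S1 S2
  obtain ⟨n, rfl⟩ := Nat.exists_eq_add_one_of_ne_zero hp.ne_zero
  have hx : (S1 ^ (n + 1)) (Pi.single (Fin.last n) 1) = 0 := by
    rw [shiftMat_mulVecLin_pow_single_last]
    funext i
    exact if_neg (by omega)
  obtain ⟨e, he⟩ := exists_linearEquiv_pi_leibnizTensor hp (shiftBasis k n)
    (shiftBasis_apply k n) hx
  refine ⟨e, he, fun w => ?_⟩
  simp only [S2, rTensor_zero, lTensor_zero, add_zero, LinearMap.zero_apply, map_zero]
  rfl
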